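/- Let M be a positive integer, fix q ∈ (1, M+1], and denote by (α_i) the quasi-greedy expansion of 1 in base q. The map x ↦ (b_i), where (b_i) denotes the greedy expansion of x, is a strictly increasing one-to-one correspondence between the interval [0, M/(q−1)] and the set of all sequences (b_i) with digits in {0,...,M} satisfying b_{n+1}b_{n+2}... < α_1α_2... (strict lexicographic inequality) whenever b_n < M. -/

import Mathlib

/-!
Both algorithms choose each digit maximal, so raising a digit below `M` by one overshoots `x`;
since `q ≤ M + 1` the error after `n` digits is then at most `M / (q - 1) / q ^ n`, and both
produce expansions. At the first digit where the greedy expansions of `x < x'` differ the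
prefixes have equal value, so the digit of `x` is the smaller one. If `b_n < M`, the rescaled
remainder `q ^ n * (x - b_1/q - ⋯ - b_n/q^n)` lies in `[0, 1)` and its greedy expansion is the
tail `b_(n+1) b_(n+2) …`, which is therefore below `α`.

Conversely, let `c < α` be admissible, first differing from `α` at index `k`. The tail
`c_(k+1) c_(k+2) …` is again admissible and below `α`, and comparing with `α` gives
`value c - 1 < (value tail - 1) / q ^ k`. Iterating, `value c - 1 ≤ M / (q - 1) / q ^ N` for
all `N`, so `value c ≤ 1` and then `value c < 1`. Applied to the tails of an admissible
sequence this is exactly the overshoot property that characterises greedy expansions.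
-/

/-- Strict lexicographic order on digit sequences (indexed from 0). -/
def LexLt (a b : ℕ → ℕ) : Prop :=
  ∃ n, (∀ k, k < n → a k = b k) ∧ a n < b n

/-- Non-strict lexicographic order on digit sequences. -/
def LexLe (a b : ℕ → ℕ) : Prop :=
  LexLt a b ∨ a = b

open Classical in
/-- The next quasi-greedy digit: the largest integer `m ≤ M` with `s + m / q ^ (n+1) < x`,
where `s` is the value of the previously chosen digits. -/
noncomputable def qgDigit (M : ℕ) (q x s : ℝ) (n : ℕ) : ℕ :=
  Nat.findGreatest (fun m => s + (m : ℝ) / q ^ (n + 1) < x) M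

/-- Partial sums of the quasi-greedy expansion of `x` in base `q` with digits `≤ M`. -/
noncomputable def qgSum (M : ℕ) (q x : ℝ) : ℕ → ℝ
  | 0 => 0
  | n + 1 => qgSum M q x n + (qgDigit M q x (qgSum M q x n) n : ℝ) / q ^ (n + 1)

/-- `quasiGreedy M q x n` is the `(n+1)`-st digit (so indexing starts at 0) of the
quasi-greedy expansion of `x` in base `q` with digits in `{0, ..., M}`:
recursively, it is the largest integer `a_n ≤ M` with `a_1/q + ⋯ + a_n/q^n < x`. -/
noncomputable def quasiGreedy (M : ℕ) (q x : ℝ) (n : ℕ) : ℕ :=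
  qgDigit M q x (qgSum M q x n) n

open Classical in
/-- The next greedy digit: the largest integer `m ≤ M` with `s + m / q ^ (n+1) ≤ x`,
where `s` is the value of the previously chosen digits. -/
noncomputable def gDigit (M : ℕ) (q x s : ℝ) (n : ℕ) : ℕ :=
  Nat.findGreatest (fun m => s + (m : ℝ) / q ^ (n + 1) ≤ x) M

/-- Partial sums of the greedy expansion of `x` in base `q` with digits `≤ M`. -/
noncomputable def gSum (M : ℕ) (q x : ℝ) : ℕ → ℝ
  | 0 => 0
  | n + 1 => gSum M q x n + (gDigit M q x (gSum M q x n) n : ℝ) / q ^ (n + 1)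

/-- `greedy M q x n` is the `(n+1)`-st digit (indexing from 0) of the greedy expansion
of `x` in base `q` with digits in `{0, ..., M}`: recursively, it is the largest
integer `b_n ≤ M` with `b_1/q + ⋯ + b_n/q^n ≤ x`. -/
noncomputable def greedy (M : ℕ) (q x : ℝ) (n : ℕ) : ℕ :=
  gDigit M q x (gSum M q x n) n

open Finset

noncomputable def expansionSum (q : ℝ) (c : ℕ → ℕ) (n : ℕ) : ℝ :=
  ∑ i ∈ range n, (c i : ℝ) / q ^ (i + 1)

noncomputable def expansionValue (q : ℝ) (c : ℕ → ℕ) : ℝ :=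
  ∑' i, (c i : ℝ) / q ^ (i + 1)

def IsAdmissible (M : ℕ) (q : ℝ) (c : ℕ → ℕ) : Prop :=
  (∀ i, c i ≤ M) ∧ ∀ n, c n < M → LexLt (fun i => c (n + 1 + i)) (quasiGreedy M q 1)

section Expansion

variable {M : ℕ} {q x : ℝ} {c : ℕ → ℕ}

lemma one_le_div_sub_one (hq : 1 < q) (hq' : q ≤ M + 1) : 1 ≤ (M : ℝ) / (q - 1) :=
  (one_le_div (sub_pos.2 hq)).2 (by linarith)

lemma expansionSum_succ (q : ℝ) (c : ℕ → ℕ) (n : ℕ) :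
    expansionSum q c (n + 1) = expansionSum q c n + (c n : ℝ) / q ^ (n + 1) :=
  sum_range_succ _ _

lemma expansionSum_congr {a b : ℕ → ℕ} {n : ℕ} (h : ∀ k < n, a k = b k) :
    expansionSum q a n = expansionSum q b n :=
  sum_congr rfl fun k hk => by rw [h k (mem_range.1 hk)]

lemma expansionSum_add (c : ℕ → ℕ) (k n : ℕ) :
    expansionSum q c (k + n) =
      expansionSum q c k + expansionSum q (fun i => c (k + i)) n / q ^ k := by
  rw [expansionSum, sum_range_add, expansionSum, expansionSum, sum_div]
  congr 1
  refine sum_congr rfl fun i _ => ?_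
  rw [div_div, ← pow_add]
  ring_nf

lemma hasSum_div_pow_succ (hq : 1 < q) (a : ℝ) :
    HasSum (fun i : ℕ => a / q ^ (i + 1)) (a / (q - 1)) := by
  have hq0 : 0 < q := by linarith
  have h := (hasSum_geometric_of_lt_one (inv_nonneg.2 hq0.le)
    (inv_lt_one_of_one_lt₀ hq)).mul_left (a / q)
  have hterm : (fun i : ℕ => a / q * q⁻¹ ^ i) = fun i => a / q ^ (i + 1) := by
    ext i
    rw [inv_pow, pow_succ]
    field_simp
  have hsum : a / q * (1 - q⁻¹)⁻¹ = a / (q - 1) := by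
    have : q - 1 ≠ 0 := by linarith
    field_simp
  rwa [hterm, hsum] at h

lemma summable_expansion (hq : 1 < q) (hc : ∀ i, c i ≤ M) :
    Summable fun i => (c i : ℝ) / q ^ (i + 1) :=
  (hasSum_div_pow_succ hq M).summable.of_nonneg_of_le (fun i => by positivity)
    fun i => by gcongr; exact_mod_cast hc i

lemma expansionValue_nonneg (hq : 0 ≤ q) (c : ℕ → ℕ) : 0 ≤ expansionValue q c :=
  tsum_nonneg fun i => by positivity

lemma expansionValue_le (hq : 1 < q) (hc : ∀ i, c i ≤ M) :
    expansionValue q c ≤ M / (q - 1) :=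
  hasSum_le (fun i => by gcongr; exact_mod_cast hc i) (summable_expansion hq hc).hasSum
    (hasSum_div_pow_succ hq M)

lemma expansionValue_eq_add (hq : 1 < q) (hc : ∀ i, c i ≤ M) (k : ℕ) :
    expansionValue q c =
      expansionSum q c k + expansionValue q (fun i => c (k + i)) / q ^ k := by
  rw [expansionValue, ← (summable_expansion hq hc).sum_add_tsum_nat_add k, expansionValue,
    ← tsum_div_const]
  congr 1
  refine tsum_congr fun i => ?_
  rw [div_div, ← pow_add, add_comm k i]
  ring_nf

lemma sub_expansionSum_le (hq : 1 < q) (hq' : q ≤ M + 1) (hc : ∀ i, c i ≤ M)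
    (hxC : x ≤ M / (q - 1))
    (hmax : ∀ n, c n < M → x ≤ expansionSum q c (n + 1) + 1 / q ^ (n + 1)) (n : ℕ) :
    x - expansionSum q c n ≤ M / (q - 1) / q ^ n := by
  induction n with
  | zero => simpa [expansionSum] using hxC
  | succ n ih =>
    have hC := one_le_div_sub_one hq hq'
    rcases (hc n).lt_or_eq with h | h
    · have hp : 1 / q ^ (n + 1) ≤ M / (q - 1) / q ^ (n + 1) := by gcongr
      linarith [hmax n h]
    · have hsplit : M / (q - 1) / q ^ n = M / (q - 1) / q ^ (n + 1) + M / q ^ (n + 1) := by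
        have : q - 1 ≠ 0 := by linarith
        have : q ≠ 0 := by linarith
        field_simp
        ring
      rw [expansionSum_succ, h]
      linarith

lemma hasSum_of_expansionSum_le (hq : 1 < q) (hq' : q ≤ M + 1) (hc : ∀ i, c i ≤ M)
    (hxC : x ≤ M / (q - 1)) (hle : ∀ n, expansionSum q c n ≤ x)
    (hmax : ∀ n, c n < M → x ≤ expansionSum q c (n + 1) + 1 / q ^ (n + 1)) :
    HasSum (fun i => (c i : ℝ) / q ^ (i + 1)) x := by
  have hq0 : 0 < q := by linarith
  rw [hasSum_iff_tendsto_nat_of_nonneg fun i => by positivity]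
  refine tendsto_of_tendsto_of_tendsto_of_le_of_le (g := fun n => x - M / (q - 1) / q ^ n)
    ?_ tendsto_const_nhds (fun n => ?_) hle
  · simpa using (tendsto_const_nhds (x := (M : ℝ) / (q - 1)).div_atTop
      (tendsto_pow_atTop_atTop_of_one_lt hq)).const_sub x
  · exact sub_le_comm.1 (sub_expansionSum_le hq hq' hc hxC hmax n)

end Expansion

lemma lexLt_of_ne_of_le {a b : ℕ → ℕ} (hne : a ≠ b)
    (hle : ∀ n, (∀ k < n, a k = b k) → a n ≤ b n) : LexLt a b := by
  have h : ∃ n, a n ≠ b n := Function.ne_iff.1 hne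
  have hpre : ∀ k < Nat.find h, a k = b k := fun k hk => not_not.1 (Nat.find_min h hk)
  exact ⟨Nat.find h, hpre, (hle _ hpre).lt_of_ne (Nat.find_spec h)⟩

section Greedy

variable {M : ℕ} {q x : ℝ} {c : ℕ → ℕ}

lemma gDigit_mono {x' s : ℝ} (h : x ≤ x') (n : ℕ) : gDigit M q x s n ≤ gDigit M q x' s n :=
  Nat.findGreatest_mono_left (fun _ hm => hm.trans h) M

lemma gDigit_le_qgDigit {x' s : ℝ} (h : x < x') (n : ℕ) :
    gDigit M q x s n ≤ qgDigit M q x' s n :=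
  Nat.findGreatest_mono_left (fun _ hm => hm.trans_lt h) M

lemma greedy_le (n : ℕ) : greedy M q x n ≤ M := Nat.findGreatest_le M

lemma quasiGreedy_le (n : ℕ) : quasiGreedy M q x n ≤ M := Nat.findGreatest_le M

lemma gSum_eq_expansionSum (n : ℕ) : gSum M q x n = expansionSum q (greedy M q x) n := by
  induction n with
  | zero => simp [gSum, expansionSum]
  | succ n ih => rw [expansionSum_succ, ← ih]; rfl

lemma qgSum_eq_expansionSum (n : ℕ) :
    qgSum M q x n = expansionSum q (quasiGreedy M q x) n := by
  induction n with
  | zero => simp [qgSum, expansionSum]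
  | succ n ih => rw [expansionSum_succ, ← ih]; rfl

lemma expansionSum_greedy_le (hx : 0 ≤ x) : ∀ n, expansionSum q (greedy M q x) n ≤ x
  | 0 => by simpa [expansionSum] using hx
  | n + 1 => by
    classical
    have h := expansionSum_greedy_le hx n
    rw [← gSum_eq_expansionSum] at h ⊢
    exact Nat.findGreatest_spec (P := fun m : ℕ => gSum M q x n + m / q ^ (n + 1) ≤ x)
      (Nat.zero_le M) (by simpa using h)

lemma expansionSum_quasiGreedy_lt (hx : 0 < x) : ∀ n, expansionSum q (quasiGreedy M q x) n < x
  | 0 => by simpa [expansionSum] using hx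
  | n + 1 => by
    classical
    have h := expansionSum_quasiGreedy_lt hx n
    rw [← qgSum_eq_expansionSum] at h ⊢
    exact Nat.findGreatest_spec (P := fun m : ℕ => qgSum M q x n + m / q ^ (n + 1) < x)
      (Nat.zero_le M) (by simpa using h)

lemma lt_expansionSum_greedy_add {n : ℕ} (h : greedy M q x n < M) :
    x < expansionSum q (greedy M q x) (n + 1) + 1 / q ^ (n + 1) := by
  classical
  have : ¬ gSum M q x n + ((greedy M q x n + 1 : ℕ) : ℝ) / q ^ (n + 1) ≤ x :=
    Nat.findGreatest_is_greatest (Nat.lt_succ_self _) h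
  rw [not_le, Nat.cast_succ, add_div, ← add_assoc, gSum_eq_expansionSum] at this
  rwa [expansionSum_succ]

lemma le_expansionSum_quasiGreedy_add {n : ℕ} (h : quasiGreedy M q x n < M) :
    x ≤ expansionSum q (quasiGreedy M q x) (n + 1) + 1 / q ^ (n + 1) := by
  classical
  have : ¬ qgSum M q x n + ((quasiGreedy M q x n + 1 : ℕ) : ℝ) / q ^ (n + 1) < x :=
    Nat.findGreatest_is_greatest (Nat.lt_succ_self _) h
  rw [not_lt, Nat.cast_succ, add_div, ← add_assoc, qgSum_eq_expansionSum] at this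
  rwa [expansionSum_succ]

lemma hasSum_greedy (hq : 1 < q) (hq' : q ≤ M + 1) (hx : 0 ≤ x) (hxC : x ≤ M / (q - 1)) :
    HasSum (fun i => (greedy M q x i : ℝ) / q ^ (i + 1)) x :=
  hasSum_of_expansionSum_le hq hq' greedy_le hxC (expansionSum_greedy_le hx)
    fun _ h => (lt_expansionSum_greedy_add h).le

lemma hasSum_quasiGreedy_one (hq : 1 < q) (hq' : q ≤ M + 1) :
    HasSum (fun i => (quasiGreedy M q 1 i : ℝ) / q ^ (i + 1)) 1 :=
  hasSum_of_expansionSum_le hq hq' quasiGreedy_le (one_le_div_sub_one hq hq')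
    (fun n => (expansionSum_quasiGreedy_lt one_pos n).le)
    fun _ h => le_expansionSum_quasiGreedy_add h

lemma greedy_eq_of_expansionSum (hq : 0 < q) (hc : ∀ i, c i ≤ M)
    (hle : ∀ n, expansionSum q c (n + 1) ≤ x)
    (hlt : ∀ n, c n < M → x < expansionSum q c (n + 1) + 1 / q ^ (n + 1)) :
    greedy M q x = c := by
  funext n
  induction n using Nat.strong_induction_on with
  | _ n ih =>
    have hsum : gSum M q x n = expansionSum q c n := by
      rw [gSum_eq_expansionSum, expansionSum_congr ih]
    show gDigit M q x (gSum M q x n) n = c n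
    rw [hsum, gDigit, Nat.findGreatest_eq_iff]
    refine ⟨hc n, fun _ => by simpa [expansionSum_succ] using hle n, fun m hm hmM hP => ?_⟩
    have hm' : ((c n + 1 : ℕ) : ℝ) / q ^ (n + 1) ≤ m / q ^ (n + 1) := by gcongr; exact hm
    have hover := hlt n (hm.trans_le hmM)
    rw [Nat.cast_succ, add_div] at hm'
    rw [expansionSum_succ] at hover
    linarith

lemma greedy_shift (hq : 0 < q) (hx : 0 ≤ x) (k : ℕ) :
    greedy M q (q ^ k * (x - expansionSum q (greedy M q x) k)) =
      fun i => greedy M q x (k + i) := by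
  have hk : 0 < q ^ k := by positivity
  refine greedy_eq_of_expansionSum hq (fun _ => greedy_le _) (fun n => ?_) fun n hn => ?_
  · have h := expansionSum_greedy_le (M := M) (q := q) hx (k + (n + 1))
    rw [expansionSum_add] at h
    rw [← div_le_iff₀' hk]
    linarith
  · have h := lt_expansionSum_greedy_add hn
    rw [show k + n + 1 = k + (n + 1) by omega, expansionSum_add] at h
    rw [← lt_div_iff₀' hk, add_div, div_div, ← pow_add, add_comm (n + 1) k]
    linarith

lemma greedy_lexLt_greedy (hq : 1 < q) (hq' : q ≤ M + 1) {x' : ℝ} (hx : 0 ≤ x)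
    (hxx' : x < x') (hx' : x' ≤ M / (q - 1)) : LexLt (greedy M q x) (greedy M q x') := by
  refine lexLt_of_ne_of_le (fun h => hxx'.ne ?_) fun n hpre => ?_
  · have hsum := hasSum_greedy hq hq' hx (hxx'.le.trans hx')
    rw [h] at hsum
    exact hsum.unique (hasSum_greedy hq hq' (hx.trans hxx'.le) hx')
  · have hs : gSum M q x n = gSum M q x' n := by
      rw [gSum_eq_expansionSum, gSum_eq_expansionSum, expansionSum_congr hpre]
    show gDigit M q x (gSum M q x n) n ≤ gDigit M q x' (gSum M q x' n) n
    rw [hs]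
    exact gDigit_mono hxx'.le n

lemma greedy_lexLt_quasiGreedy_one (hq : 1 < q) (hq' : q ≤ M + 1) (hx : 0 ≤ x) (hx1 : x < 1) :
    LexLt (greedy M q x) (quasiGreedy M q 1) := by
  refine lexLt_of_ne_of_le (fun h => hx1.ne ?_) fun n hpre => ?_
  · have hsum := hasSum_greedy hq hq' hx (hx1.le.trans (one_le_div_sub_one hq hq'))
    rw [h] at hsum
    exact hsum.unique (hasSum_quasiGreedy_one hq hq')
  · have hs : gSum M q x n = qgSum M q 1 n := by
      rw [gSum_eq_expansionSum, qgSum_eq_expansionSum, expansionSum_congr hpre]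
    show gDigit M q x (gSum M q x n) n ≤ qgDigit M q 1 (qgSum M q 1 n) n
    rw [hs]
    exact gDigit_le_qgDigit hx1 n

lemma isAdmissible_greedy (hq : 1 < q) (hq' : q ≤ M + 1) (hx : 0 ≤ x) :
    IsAdmissible M q (greedy M q x) := by
  have hq0 : 0 < q := by linarith
  refine ⟨greedy_le, fun n hn => ?_⟩
  rw [← greedy_shift hq0 hx (n + 1)]
  apply greedy_lexLt_quasiGreedy_one hq hq'
  · exact mul_nonneg (by positivity) (sub_nonneg.2 (expansionSum_greedy_le hx _))
  · rw [← lt_div_iff₀' (by positivity)]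
    linarith [lt_expansionSum_greedy_add hn]

end Greedy

namespace IsAdmissible

variable {M : ℕ} {q : ℝ} {c : ℕ → ℕ}

lemma shift (h : IsAdmissible M q c) (k : ℕ) : IsAdmissible M q fun i => c (k + i) :=
  ⟨fun _ => h.1 _, fun n hn => by simpa only [add_assoc] using h.2 (k + n) hn⟩

lemma exists_sub_one_lt (hq : 1 < q) (h : IsAdmissible M q c)
    (hlt : LexLt c (quasiGreedy M q 1)) :
    ∃ k, c k < M ∧ expansionValue q c - 1 <
      (expansionValue q (fun i => c (k + 1 + i)) - 1) / q ^ (k + 1) := by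
  obtain ⟨k, hpre, hk⟩ := hlt
  refine ⟨k, hk.trans_le (quasiGreedy_le k), ?_⟩
  have hα := expansionSum_quasiGreedy_lt (M := M) (q := q) one_pos (k + 1)
  have hdigit : ((c k + 1 : ℕ) : ℝ) / q ^ (k + 1) ≤ (quasiGreedy M q 1 k : ℝ) / q ^ (k + 1) := by
    gcongr
    exact hk
  rw [expansionValue_eq_add hq h.1 (k + 1), expansionSum_succ, expansionSum_congr hpre]
  rw [expansionSum_succ] at hα
  rw [Nat.cast_succ, add_div] at hdigit
  rw [sub_div]
  linarith

lemma expansionValue_sub_one_le (hq : 1 < q) (hq' : q ≤ M + 1) (N : ℕ)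
    (h : IsAdmissible M q c) (hlt : LexLt c (quasiGreedy M q 1)) :
    expansionValue q c - 1 ≤ M / (q - 1) / q ^ N := by
  induction N generalizing c with
  | zero =>
    rw [pow_zero, div_one]
    linarith [expansionValue_le hq h.1]
  | succ N ih =>
    obtain ⟨k, hk, hstep⟩ := h.exists_sub_one_lt hq hlt
    have hC := one_le_div_sub_one hq hq'
    calc expansionValue q c - 1
        ≤ (expansionValue q (fun i => c (k + 1 + i)) - 1) / q ^ (k + 1) := hstep.le
      _ ≤ M / (q - 1) / q ^ N / q ^ (k + 1) := by
        gcongr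
        exact ih (h.shift (k + 1)) (h.2 k hk)
      _ ≤ M / (q - 1) / q ^ (N + 1) := by
        rw [div_div, ← pow_add]
        gcongr
        · exact hq.le
        · omega

lemma expansionValue_le_one (hq : 1 < q) (hq' : q ≤ M + 1) (h : IsAdmissible M q c)
    (hlt : LexLt c (quasiGreedy M q 1)) : expansionValue q c ≤ 1 :=
  sub_nonpos.1 <| ge_of_tendsto' (tendsto_const_nhds.div_atTop
    (tendsto_pow_atTop_atTop_of_one_lt hq)) fun N => h.expansionValue_sub_one_le hq hq' N hlt

lemma expansionValue_lt_one (hq : 1 < q) (hq' : q ≤ M + 1) (h : IsAdmissible M q c)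
    (hlt : LexLt c (quasiGreedy M q 1)) : expansionValue q c < 1 := by
  obtain ⟨k, hk, hstep⟩ := h.exists_sub_one_lt hq hlt
  have htail := (h.shift (k + 1)).expansionValue_le_one hq hq' (h.2 k hk)
  have : (expansionValue q (fun i => c (k + 1 + i)) - 1) / q ^ (k + 1) ≤ 0 :=
    div_nonpos_of_nonpos_of_nonneg (by linarith) (by positivity)
  linarith

lemma greedy_expansionValue (hq : 1 < q) (hq' : q ≤ M + 1) (h : IsAdmissible M q c) :
    greedy M q (expansionValue q c) = c := by
  refine greedy_eq_of_expansionSum (by linarith) h.1 (fun n => ?_) fun n hn => ?_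
  <;> rw [expansionValue_eq_add hq h.1 (n + 1)]
  · have := expansionValue_nonneg (by linarith) fun i => c (n + 1 + i)
    have : 0 ≤ expansionValue q (fun i => c (n + 1 + i)) / q ^ (n + 1) := by positivity
    linarith
  · gcongr
    exact (h.shift (n + 1)).expansionValue_lt_one hq hq' (h.2 n hn)

end IsAdmissible

theorem greedy_bijection (M : ℕ) (q : ℝ) (hq1 : 1 < q)
    (hq2 : q ≤ (M : ℝ) + 1) :
    (∀ x x' : ℝ, 0 ≤ x → x < x' → x' ≤ (M : ℝ) / (q - 1) →
      LexLt (greedy M q x) (greedy M q x')) ∧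
    Set.BijOn (fun x : ℝ => greedy M q x) (Set.Icc 0 ((M : ℝ) / (q - 1)))
      {b : ℕ → ℕ | (∀ i, b i ≤ M) ∧
        ∀ n, b n < M → LexLt (fun i => b (n + 1 + i)) (quasiGreedy M q 1)} := by
  refine ⟨fun x x' hx hxx' hx' => greedy_lexLt_greedy hq1 hq2 hx hxx' hx', ?_, ?_, ?_⟩
  · exact fun x hx => isAdmissible_greedy hq1 hq2 hx.1
  · intro x hx x' hx' h
    have hsum := hasSum_greedy hq1 hq2 hx.1 hx.2
    rw [show greedy M q x = greedy M q x' from h] at hsum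
    exact hsum.unique (hasSum_greedy hq1 hq2 hx'.1 hx'.2)
  · intro c hc
    exact ⟨expansionValue q c, ⟨expansionValue_nonneg (by linarith) c, expansionValue_le hq1 hc.1⟩,
      IsAdmissible.greedy_expansionValue hq1 hq2 hc⟩
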